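/- arXiv:2001.11979 — 2 statements merged into one kernel-verified Lean document; each statement's English description precedes it below -/
import Mathlib

section
/- Let R be the characteristic radical (the maximal solvable characteristic ideal) of a finite-dimensional left Leibniz algebra A. Then the quotient A/R is a characteristically semisimple Lie algebra, i.e., its only solvable characteristic ideal is zero. -/
section Defs
variable {F A : Type*} [Field F] [AddCommGroup A] [Module F A]

def IsLeibniz (b : A →ₗ[F] A →ₗ[F] A) : Prop :=
  ∀ x y z : A, b x (b y z) = b (b x y) z + b y (b x z)

def IsDer (b : A →ₗ[F] A →ₗ[F] A) (δ : A →ₗ[F] A) : Prop :=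
  ∀ x y : A, δ (b x y) = b (δ x) y + b x (δ y)

def IsIdeal (b : A →ₗ[F] A →ₗ[F] A) (I : Submodule F A) : Prop :=
  ∀ x y : A, x ∈ I → b x y ∈ I ∧ b y x ∈ I

/-- An ideal invariant under all derivations: a characteristic ideal. -/
def IsCharIdeal (b : A →ₗ[F] A →ₗ[F] A) (I : Submodule F A) : Prop :=
  IsIdeal b I ∧ ∀ δ : A →ₗ[F] A, IsDer b δ → I.map δ ≤ I

/-- The span of all brackets `[x, y]` with `x ∈ S`, `y ∈ T`. -/
def bracketSpan (b : A →ₗ[F] A →ₗ[F] A) (S T : Submodule F A) : Submodule F A :=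
  Submodule.span F {z | ∃ x ∈ S, ∃ y ∈ T, z = b x y}

/-- The derived series of a submodule. -/
def derSeries (b : A →ₗ[F] A →ₗ[F] A) (I : Submodule F A) : ℕ → Submodule F A
  | 0 => I
  | n + 1 => bracketSpan b (derSeries b I n) (derSeries b I n)

def IsSolvableIdl (b : A →ₗ[F] A →ₗ[F] A) (I : Submodule F A) : Prop :=
  ∃ k : ℕ, derSeries b I k = ⊥

end Defs

section Aux
variable {F A : Type*} [Field F] [AddCommGroup A] [Module F A]

lemma bracketSpan_mono (b : A →ₗ[F] A →ₗ[F] A) {S T S' T' : Submodule F A}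
    (hS : S ≤ S') (hT : T ≤ T') : bracketSpan b S T ≤ bracketSpan b S' T' :=
  Submodule.span_mono (fun z hz => by
    obtain ⟨x, hx, y, hy, h⟩ := hz
    exact ⟨x, hS hx, y, hT hy, h⟩)

lemma derSeries_mono (b : A →ₗ[F] A →ₗ[F] A) {I J : Submodule F A} (h : I ≤ J) :
    ∀ n, derSeries b I n ≤ derSeries b J n
  | 0 => h
  | n + 1 => bracketSpan_mono b (derSeries_mono b h n) (derSeries_mono b h n)

lemma derSeries_add (b : A →ₗ[F] A →ₗ[F] A) (I : Submodule F A) (k : ℕ) :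
    ∀ m, derSeries b (derSeries b I k) m = derSeries b I (k + m)
  | 0 => rfl
  | m + 1 => by
    show bracketSpan b _ _ = bracketSpan b _ _
    rw [derSeries_add b I k m]
    rfl

/-- The Leibniz kernel: span of squares. -/
def Leib (b : A →ₗ[F] A →ₗ[F] A) : Submodule F A :=
  Submodule.span F {z | ∃ x : A, z = b x x}

lemma sq_mem_Leib (b : A →ₗ[F] A →ₗ[F] A) (x : A) : b x x ∈ Leib b :=
  Submodule.subset_span ⟨x, rfl⟩

lemma sym_mem_Leib (b : A →ₗ[F] A →ₗ[F] A) (x y : A) : b x y + b y x ∈ Leib b := by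
  have h : b x y + b y x = b (x + y) (x + y) - b x x - b y y := by
    simp only [map_add, LinearMap.add_apply]; abel
  rw [h]
  exact sub_mem (sub_mem (sq_mem_Leib b _) (sq_mem_Leib b _)) (sq_mem_Leib b _)

lemma Leib_left_zero {b : A →ₗ[F] A →ₗ[F] A} (hb : IsLeibniz b) {u : A}
    (hu : u ∈ Leib b) : b u = 0 := by
  have : Leib b ≤ LinearMap.ker b := by
    rw [Leib, Submodule.span_le]
    rintro z ⟨x, rfl⟩
    rw [SetLike.mem_coe, LinearMap.mem_ker]
    ext w
    simp only [LinearMap.zero_apply]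
    exact right_eq_add.mp (hb x x w)
  exact LinearMap.mem_ker.mp (this hu)

lemma Leib_char {b : A →ₗ[F] A →ₗ[F] A} (hb : IsLeibniz b) : IsCharIdeal b (Leib b) := by
  constructor
  · intro x y hx
    constructor
    · show b x y ∈ Leib b
      rw [Leib_left_zero hb hx, LinearMap.zero_apply]
      exact zero_mem _
    · have : Leib b ≤ Submodule.comap (b y) (Leib b) := by
        rw [Leib, Submodule.span_le]
        rintro z ⟨x, rfl⟩
        have h := hb y x x
        simp only [SetLike.mem_coe, Submodule.mem_comap, h]
        exact sym_mem_Leib b (b y x) x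
      exact this hx
  · intro δ hδ
    rw [Submodule.map_le_iff_le_comap, Leib, Submodule.span_le]
    rintro z ⟨x, rfl⟩
    simp only [SetLike.mem_coe, Submodule.mem_comap, hδ x x]
    exact sym_mem_Leib b (δ x) x

lemma Leib_solvable {b : A →ₗ[F] A →ₗ[F] A} (hb : IsLeibniz b) :
    IsSolvableIdl b (Leib b) := by
  refine ⟨1, ?_⟩
  show bracketSpan b (Leib b) (Leib b) = ⊥
  rw [eq_bot_iff, bracketSpan, Submodule.span_le]
  rintro z ⟨x, hx, y, hy, rfl⟩
  rw [Leib_left_zero hb hx]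
  simp only [LinearMap.zero_apply, SetLike.mem_coe]
  exact zero_mem _

end Aux

/-- Let `R` be the characteristic radical (the maximal solvable characteristic ideal) of a
finite-dimensional left Leibniz algebra `A`.  Then the quotient `A/R` (with the induced
bracket `bq`) is a characteristically semisimple Lie algebra: its bracket is antisymmetric
and its only solvable characteristic ideal is zero. -/
theorem quotient_by_charRadical_charSemisimple
    {F A : Type*} [Field F] [AddCommGroup A] [Module F A] [FiniteDimensional F A]
    (b : A →ₗ[F] A →ₗ[F] A) (hb : IsLeibniz b)
    (R : Submodule F A)
    (hRchar : IsCharIdeal b R) (hRsolv : IsSolvableIdl b R)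
    (hRmax : ∀ S : Submodule F A, IsCharIdeal b S → IsSolvableIdl b S → S ≤ R)
    (bq : (A ⧸ R) →ₗ[F] (A ⧸ R) →ₗ[F] (A ⧸ R))
    (hbq : ∀ x y : A, bq (R.mkQ x) (R.mkQ y) = R.mkQ (b x y)) :
    (∀ u v : A ⧸ R, bq u v = -(bq v u)) ∧
    (∀ S : Submodule F (A ⧸ R), IsCharIdeal bq S → IsSolvableIdl bq S → S = ⊥) := by
  have hLeibR : Leib b ≤ R := hRmax _ (Leib_char hb) (Leib_solvable hb)
  have surj : Function.Surjective R.mkQ := Submodule.mkQ_surjective R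
  constructor
  · intro u v
    obtain ⟨x, rfl⟩ := surj u
    obtain ⟨y, rfl⟩ := surj v
    rw [hbq, hbq, eq_neg_iff_add_eq_zero, ← map_add]
    exact (Submodule.Quotient.mk_eq_zero R).mpr (hLeibR (sym_mem_Leib b x y))
  · intro S hSchar hSsolv
    set T : Submodule F A := S.comap R.mkQ with hT
    have hTideal : IsIdeal b T := by
      intro x y hx
      have hx' : R.mkQ x ∈ S := hx
      constructor
      · show R.mkQ (b x y) ∈ S
        rw [← hbq]
        exact (hSchar.1 _ (R.mkQ y) hx').1
      · show R.mkQ (b y x) ∈ S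
        rw [← hbq]
        exact (hSchar.1 _ (R.mkQ y) hx').2
    have hTchar : IsCharIdeal b T := by
      refine ⟨hTideal, ?_⟩
      intro δ hδ
      have hδR : R ≤ R.comap δ :=
        Submodule.map_le_iff_le_comap.mp (hRchar.2 δ hδ)
      set δq : (A ⧸ R) →ₗ[F] (A ⧸ R) := R.mapQ R δ hδR with hδq
      have hδqmk : ∀ x : A, δq (R.mkQ x) = R.mkQ (δ x) := fun x => rfl
      have hδqder : IsDer bq δq := by
        intro u v
        obtain ⟨x, rfl⟩ := surj u
        obtain ⟨y, rfl⟩ := surj v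
        rw [hbq, hδqmk, hδ, map_add, hδqmk, hδqmk, hbq, hbq]
      rw [Submodule.map_le_iff_le_comap]
      intro x hx
      show δq (R.mkQ x) ∈ S
      exact hSchar.2 δq hδqder ⟨R.mkQ x, hx, rfl⟩
    have hcomp : ∀ n, derSeries b T n ≤ (derSeries bq S n).comap R.mkQ := by
      intro n
      induction n with
      | zero => exact le_rfl
      | succ n ih =>
        show bracketSpan b _ _ ≤ Submodule.comap R.mkQ (bracketSpan bq _ _)
        rw [bracketSpan, Submodule.span_le]
        rintro z ⟨x, hx, y, hy, rfl⟩
        show R.mkQ (b x y) ∈ bracketSpan bq _ _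
        rw [← hbq]
        exact Submodule.subset_span ⟨R.mkQ x, ih hx, R.mkQ y, ih hy, rfl⟩
    have hTsolv : IsSolvableIdl b T := by
      obtain ⟨k, hk⟩ := hSsolv
      obtain ⟨l, hl⟩ := hRsolv
      refine ⟨k + l, ?_⟩
      have h1 : derSeries b T k ≤ R := by
        have := hcomp k
        rw [hk] at this
        intro x hx
        have h0 : R.mkQ x = 0 := this hx
        exact (Submodule.Quotient.mk_eq_zero R).mp h0
      rw [← derSeries_add, eq_bot_iff]
      calc derSeries b (derSeries b T k) l ≤ derSeries b R l := derSeries_mono b h1 l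
        _ = ⊥ := hl
    have hTR : T ≤ R := hRmax T hTchar hTsolv
    rw [eq_bot_iff]
    intro u hu
    obtain ⟨x, rfl⟩ := surj u
    have : x ∈ T := hu
    rw [Submodule.mem_bot]
    exact (Submodule.Quotient.mk_eq_zero R).mpr (hTR this)
end

section
/- Let C be the n-dimensional nilpotent cyclic left Leibniz algebra with basis x, x², …, xⁿ, where [x, x^i] = x^{i+1} for 1 ≤ i ≤ n−1 and [x, xⁿ] = 0, and all other products of basis elements are zero. Then the derivation algebra Der(C) is n-dimensional, spanned by δ₁, …, δₙ where δ₁(x^i) = i·x^i, and for 2 ≤ k ≤ n, δ_k(x^i) = x^{i+k−1} if i+k−1 ≤ n and δ_k(x^i) = 0 otherwise. -/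
section Cyclic
variable (F : Type*) [Field F] (n : ℕ) [NeZero n]

/-- The shift sending `x^{i}` to `x^{i+1}` (with `x^{n}` mapped to `0`); here the coordinate
`j : Fin n` records the coefficient of `x^{j+1}`. -/
def shiftMap : (Fin n → F) →ₗ[F] (Fin n → F) where
  toFun v j := if (j : ℕ) = 0 then 0 else v ⟨(j : ℕ) - 1, by have := j.isLt; omega⟩
  map_add' u v := by funext j; by_cases h : j = 0 <;> simp [h]
  map_smul' c v := by funext j; by_cases h : j = 0 <;> simp [h]

/-- The bracket of the `n`-dimensional nilpotent cyclic Leibniz algebra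
`C = span{x, x², …, xⁿ}`, `[x, x^i] = x^{i+1}` (`i < n`), `[x, xⁿ] = 0`, and
`[x^j, C] = 0` for `j ≥ 2`. -/
def cycBracket : (Fin n → F) →ₗ[F] (Fin n → F) →ₗ[F] (Fin n → F) :=
  LinearMap.mk₂ F (fun u v => u 0 • shiftMap F n v)
    (by intro u u' v; simp [add_smul])
    (by intro c u v; simp [mul_smul])
    (by intro u v v'; simp [smul_add])
    (by intro c u v; simp [smul_comm c])

/-- The derivations `δ₁, …, δₙ`; `cycDer k` for `k : Fin n` corresponds to `δ_{k+1}`: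
`δ₁(x^i) = i·x^i`, and for `k ≥ 2`, `δ_k(x^i) = x^{i+k-1}` if `i+k-1 ≤ n` and `0` else. -/
def cycDer (k : Fin n) : (Fin n → F) →ₗ[F] (Fin n → F) where
  toFun v j :=
    if (k : ℕ) = 0 then ((j : ℕ) + 1 : F) * v j
    else if (k : ℕ) ≤ (j : ℕ) then v ⟨(j : ℕ) - (k : ℕ), by have := j.isLt; omega⟩
    else 0
  map_add' u v := by
    funext j
    simp only [Pi.add_apply]
    split_ifs <;> ring
  map_smul' c v := by
    funext j
    simp only [Pi.smul_apply, smul_eq_mul, RingHom.id_apply]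
    split_ifs <;> ring

end Cyclic

lemma fin_zero_val' (n : ℕ) [NeZero n] : ((0 : Fin n) : ℕ) = 0 := rfl

section MyAux
variable (F : Type*) [Field F] (n : ℕ) [NeZero n]

lemma shiftMap_apply (v : Fin n → F) (j : Fin n) :
    shiftMap F n v j =
      if (j : ℕ) = 0 then 0 else v ⟨(j : ℕ) - 1, by have := j.isLt; omega⟩ := by
  simp only [shiftMap, LinearMap.coe_mk, AddHom.coe_mk, Fin.ext_iff, fin_zero_val']

lemma cycBracket_apply (u v : Fin n → F) :
    cycBracket F n u v = u 0 • shiftMap F n v := rfl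

lemma cycDer_apply (k : Fin n) (v : Fin n → F) (j : Fin n) :
    cycDer F n k v j =
      if (k : ℕ) = 0 then ((j : ℕ) + 1 : F) * v j
      else if (k : ℕ) ≤ (j : ℕ) then v ⟨(j : ℕ) - (k : ℕ), by have := j.isLt; omega⟩
      else 0 := rfl

lemma part1 : ∀ k : Fin n, IsDer (cycBracket F n) (cycDer F n k) := by
  intro k u v
  funext j
  simp only [cycBracket_apply, map_smul, Pi.add_apply, Pi.smul_apply, smul_eq_mul,
    cycDer_apply, shiftMap_apply, fin_zero_val']
  by_cases hk : (k : ℕ) = 0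
  · simp only [hk, if_true, eq_self_iff_true]
    by_cases hj : (j : ℕ) = 0
    · simp [hj]
    · obtain ⟨m, hm⟩ : ∃ m, (j : ℕ) = m + 1 := ⟨(j : ℕ) - 1, by omega⟩
      simp only [hm, if_neg (by omega : ¬ (m + 1 = 0)), Nat.add_sub_cancel]
      push_cast
      ring
  · have := j.isLt
    simp only [if_neg hk]
    split_ifs <;> first
      | ring1
      | (exfalso; omega)
      | (simp only [show (j : ℕ) - (k : ℕ) - 1 = (j : ℕ) - 1 - (k : ℕ) by omega]; ring1)
      | (have hk0 : ¬ (k : ℕ) ≤ 0 := by omega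
         have hj0 : ¬ (j : ℕ) = 0 := by omega
         simp only [hk0, hj0, ↓reduceDIte, ↓reduceIte, zero_mul, zero_add]
         split_ifs <;> first
           | ring1
           | (exfalso; omega)
           | (simp only [show (j : ℕ) - (k : ℕ) - 1 = (j : ℕ) - 1 - (k : ℕ) by omega]; ring1)
           | (congr 2; exact Fin.ext (by simp only [Fin.val_mk]; omega)))
      | (have hk0 : ¬ (k : ℕ) ≤ 0 := by omega
         have hk1 : ¬ (k : ℕ) ≤ (j : ℕ) - 1 := by omega
         simp only [hk0, hk1, ↓reduceIte, ite_self, mul_zero, zero_mul, add_zero])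

lemma cycDer_single (k : Fin n) :
    cycDer F n k (Pi.single 0 1) = Pi.single k 1 := by
  funext j
  rw [cycDer_apply]
  simp only [Pi.single_apply, Fin.ext_iff, fin_zero_val']
  have := j.isLt
  split_ifs <;> first | rfl | omega | simp_all

lemma bracket_e0 (v : Fin n → F) :
    cycBracket F n (Pi.single 0 1) v = shiftMap F n v := by
  rw [cycBracket_apply]
  simp

lemma shift_single (i : Fin n) (h : (i : ℕ) + 1 < n) :
    shiftMap F n (Pi.single i 1) = Pi.single ⟨(i : ℕ) + 1, h⟩ 1 := by
  funext j
  rw [shiftMap_apply]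
  simp only [Pi.single_apply, Fin.ext_iff]
  have := j.isLt
  split_ifs <;> first | rfl | omega

lemma der_rec (δ : (Fin n → F) →ₗ[F] (Fin n → F)) (hδ : IsDer (cycBracket F n) δ)
    (i : Fin n) (h : (i : ℕ) + 1 < n) :
    δ (Pi.single ⟨(i : ℕ) + 1, h⟩ 1) =
      (δ (Pi.single 0 1) 0) • (Pi.single ⟨(i : ℕ) + 1, h⟩ 1 : Fin n → F) +
        shiftMap F n (δ (Pi.single i 1)) := by
  have h1 : (Pi.single ⟨(i : ℕ) + 1, h⟩ 1 : Fin n → F) =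
      cycBracket F n (Pi.single 0 1) (Pi.single i 1) := by
    rw [bracket_e0, shift_single F n i h]
  rw [h1, hδ, cycBracket_apply, cycBracket_apply, shift_single F n i h]
  simp only [Pi.single_eq_same, one_smul, h1]

lemma der_ext (δ δ' : (Fin n → F) →ₗ[F] (Fin n → F))
    (hδ : IsDer (cycBracket F n) δ) (hδ' : IsDer (cycBracket F n) δ')
    (h0 : δ (Pi.single 0 1) = δ' (Pi.single 0 1)) : δ = δ' := by
  have key : ∀ m : ℕ, ∀ hm : m < n,
      δ (Pi.single ⟨m, hm⟩ 1) = δ' (Pi.single ⟨m, hm⟩ 1) := by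
    intro m
    induction m with
    | zero =>
      intro hm
      have e : (⟨0, hm⟩ : Fin n) = 0 := rfl
      rw [e]; exact h0
    | succ m ih =>
      intro hm
      have hm' : m < n := by omega
      show δ (Pi.single ⟨((⟨m, hm'⟩ : Fin n) : ℕ) + 1, hm⟩ 1) =
        δ' (Pi.single ⟨((⟨m, hm'⟩ : Fin n) : ℕ) + 1, hm⟩ 1)
      rw [der_rec F n δ hδ ⟨m, hm'⟩ hm, der_rec F n δ' hδ' ⟨m, hm'⟩ hm, h0, ih hm']
  apply Module.Basis.ext (Pi.basisFun F (Fin n))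
  intro i
  have := key (i : ℕ) i.isLt
  simpa [Pi.basisFun_apply] using this

end MyAux

/-- For the `n`-dimensional nilpotent cyclic left Leibniz algebra `C`, the derivation algebra
`Der(C)` is `n`-dimensional, spanned by the linearly independent derivations
`δ₁, …, δₙ` given by `δ₁(x^i) = i·x^i` and `δ_k(x^i) = x^{i+k-1}` (zero if `i+k-1 > n`). -/
theorem der_of_nilpotent_cyclic
    (F : Type*) [Field F] (n : ℕ) [NeZero n] :
    (∀ k : Fin n, IsDer (cycBracket F n) (cycDer F n k)) ∧
    LinearIndependent F (cycDer F n) ∧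
    (∀ δ : (Fin n → F) →ₗ[F] (Fin n → F), IsDer (cycBracket F n) δ →
      δ ∈ Submodule.span F (Set.range (cycDer F n))) := by
  refine ⟨part1 F n, ?_, ?_⟩
  · -- linear independence
    have base : LinearIndependent F (fun k : Fin n => (Pi.single k 1 : Fin n → F)) := by
      rw [Fintype.linearIndependent_iff]
      intro g hg k
      have h1 : ∑ i, (Pi.single i (g i) : Fin n → F) = 0 := by
        rw [← hg]
        exact Finset.sum_congr rfl fun i _ => by rw [← Pi.single_smul]; simp
      rw [Finset.univ_sum_single] at h1
      exact congrFun h1 k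
    apply LinearIndependent.of_comp (LinearMap.applyₗ (Pi.single 0 1 : Fin n → F))
    have hcomp : ((LinearMap.applyₗ (Pi.single 0 1 : Fin n → F)) ∘ cycDer F n) =
        fun k : Fin n => (Pi.single k 1 : Fin n → F) := by
      funext k
      exact cycDer_single F n k
    rw [hcomp]
    exact base
  · -- spanning
    intro δ hδ
    set c : Fin n → F := δ (Pi.single 0 1) with hc
    set D : (Fin n → F) →ₗ[F] (Fin n → F) := ∑ k, c k • cycDer F n k with hD
    have hDder : IsDer (cycBracket F n) D := by
      intro u v
      simp only [hD, LinearMap.sum_apply, LinearMap.smul_apply, map_sum, map_smul]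
      rw [← Finset.sum_add_distrib]
      exact Finset.sum_congr rfl fun k _ => by rw [part1 F n k u v, smul_add]
    have hD0 : D (Pi.single 0 1) = c := by
      simp only [hD, LinearMap.sum_apply, LinearMap.smul_apply, cycDer_single]
      calc ∑ k, c k • (Pi.single k 1 : Fin n → F)
          = ∑ k, (Pi.single k (c k) : Fin n → F) :=
            Finset.sum_congr rfl fun k _ => by rw [← Pi.single_smul]; simp
        _ = c := Finset.univ_sum_single c
    have : δ = D := der_ext F n δ D hδ hDder (by rw [hD0, ← hc])
    rw [this]
    exact Submodule.sum_mem _ fun k _ =>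
      Submodule.smul_mem _ _ (Submodule.subset_span ⟨k, rfl⟩)
end
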